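/- Let m, s, s_* be natural numbers with s_* ≤ s < m, let θ ∈ ℝ^m, and let θ_* ∈ ℝ^m satisfy ‖θ_*‖₀ ≤ s_*. Then ‖H_s(θ) − θ‖² ≤ ((m − s)/(m − s_*)) · ‖θ − θ_*‖². -/

import Mathlib

open scoped BigOperators

open Classical in
noncomputable def supp {d : ℕ} (x : EuclideanSpace ℝ (Fin d)) : Finset (Fin d) :=
  Finset.univ.filter fun j => x j ≠ 0

noncomputable def norm0 {d : ℕ} (x : EuclideanSpace ℝ (Fin d)) : ℕ := (supp x).card

/-- `w` is a hard thresholding of `v` at sparsity level `s`: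
`w ∈ argmin {‖u − v‖ : ‖u‖₀ ≤ s}`. -/
def IsHardThreshold {d : ℕ} (s : ℕ) (v w : EuclideanSpace ℝ (Fin d)) : Prop :=
  norm0 w ≤ s ∧ ∀ u : EuclideanSpace ℝ (Fin d), norm0 u ≤ s → ‖w - v‖ ≤ ‖u - v‖

/-!
Let `A` be the complement of the support of `θ_*`, so `|A| ≥ m − s_*` and `θ_*` vanishes on `A`.
Some `m − s` coordinates of `A` carry at most the fraction `(m − s)/|A|` of the mass
`∑_{j ∈ A} θ_j²`; zeroing them in `θ` gives an `s`-sparse competitor `u` with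
`‖u − θ‖² ≤ (m − s)/(m − s_*) · ∑_{j ∈ A} θ_j² ≤ (m − s)/(m − s_*) · ‖θ − θ_*‖²`,
and `H_s(θ)` is at least as close to `θ` as `u`.
-/

namespace Finset

theorem exists_subset_card_eq_card_nsmul_sum_le {ι M : Type*} [DecidableEq ι] [AddCommMonoid M]
    [LinearOrder M] [IsOrderedAddMonoid M] (f : ι → M) (A : Finset ι) :
    ∀ k ≤ #A, ∃ B ⊆ A, #B = k ∧ #A • ∑ j ∈ B, f j ≤ k • ∑ j ∈ A, f j := by
  induction A using Finset.induction_on_max_value f with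
  | empty =>
    intro k hk
    rw [card_empty, Nat.le_zero] at hk
    exact ⟨∅, empty_subset _, hk ▸ card_empty, by simp⟩
  | insert a A ha hmax ih =>
    intro k hk
    rw [card_insert_of_notMem ha] at hk ⊢
    rcases hk.eq_or_lt with rfl | hk
    · exact ⟨insert a A, Subset.rfl, card_insert_of_notMem ha, le_rfl⟩
    -- `a` has maximal weight, so adding it to `A` cannot spoil the choice made inside `A`.
    obtain ⟨B, hBA, rfl, hB⟩ := ih k (Nat.lt_succ_iff.mp hk)
    have hBa : ∑ j ∈ B, f j ≤ #B • f a := sum_le_card_nsmul _ _ _ fun j hj => hmax j (hBA hj)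
    refine ⟨B, hBA.trans (subset_insert _ _), rfl, ?_⟩
    calc (#A + 1) • ∑ j ∈ B, f j = #A • ∑ j ∈ B, f j + ∑ j ∈ B, f j := succ_nsmul _ _
      _ ≤ #B • ∑ j ∈ A, f j + #B • f a := add_le_add hB hBa
      _ = #B • ∑ j ∈ insert a A, f j := by rw [sum_insert ha, nsmul_add, add_comm]

end Finset

open Finset

section Coordinates

variable {d : ℕ}

noncomputable def zeroOn (B : Finset (Fin d)) (x : EuclideanSpace ℝ (Fin d)) :
    EuclideanSpace ℝ (Fin d) :=
  WithLp.toLp 2 fun j => if j ∈ B then 0 else x j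

theorem norm0_zeroOn_le (B : Finset (Fin d)) (x : EuclideanSpace ℝ (Fin d)) :
    norm0 (zeroOn B x) ≤ d - #B := by
  have hsupp : supp (zeroOn B x) ⊆ Bᶜ := fun j hj => by
    simp_all [supp, zeroOn]
  calc norm0 (zeroOn B x) ≤ #Bᶜ := card_le_card hsupp
    _ = d - #B := by rw [card_compl, Fintype.card_fin]

theorem norm_zeroOn_sub_sq (B : Finset (Fin d)) (x : EuclideanSpace ℝ (Fin d)) :
    ‖zeroOn B x - x‖ ^ 2 = ∑ j ∈ B, x j ^ 2 := by
  rw [EuclideanSpace.real_norm_sq_eq, ← sum_subset (subset_univ B) fun j _ hj => by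
    simp [zeroOn, hj]]
  exact sum_congr rfl fun j hj => by simp [zeroOn, hj]

theorem card_compl_supp (x : EuclideanSpace ℝ (Fin d)) : #(supp x)ᶜ = d - norm0 x := by
  rw [card_compl, Fintype.card_fin, norm0]

theorem sum_compl_supp_sq_le_norm_sub_sq (x y : EuclideanSpace ℝ (Fin d)) :
    ∑ j ∈ (supp y)ᶜ, x j ^ 2 ≤ ‖x - y‖ ^ 2 := by
  have hy : ∀ j ∈ (supp y)ᶜ, x j ^ 2 = (x - y) j ^ 2 := fun j hj => by
    simp_all [supp]
  rw [sum_congr rfl hy, EuclideanSpace.real_norm_sq_eq]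
  exact sum_le_sum_of_subset_of_nonneg (subset_univ _) fun _ _ _ => sq_nonneg _

end Coordinates

theorem hardThreshold_sq_dist_le {m s sstar : ℕ} (hss : sstar ≤ s) (hsm : s < m)
    (θ θstar θ' : EuclideanSpace ℝ (Fin m)) (hθstar : norm0 θstar ≤ sstar)
    (hHT : IsHardThreshold s θ θ') :
    ‖θ' - θ‖ ^ 2 ≤ ((m : ℝ) - s) / ((m : ℝ) - sstar) * ‖θ - θstar‖ ^ 2 := by
  set A := (supp θstar)ᶜ
  have hA : m - sstar ≤ #A := card_compl_supp θstar ▸ by omega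
  obtain ⟨B, -, hB, hBsum⟩ :=
    exists_subset_card_eq_card_nsmul_sum_le (fun j => θ j ^ 2) A (m - s) (by omega)
  have hu : norm0 (zeroOn B θ) ≤ s := (norm0_zeroOn_le B θ).trans (by omega)
  have hA' : (m : ℝ) - sstar ≤ #A := by
    rw [← Nat.cast_sub (hss.trans hsm.le)]
    exact_mod_cast hA
  have hmsstar : (0 : ℝ) < m - sstar := by
    linarith [(Nat.cast_le (α := ℝ)).mpr hss, (Nat.cast_lt (α := ℝ)).mpr hsm]
  have hms : (0 : ℝ) ≤ m - s := by linarith [(Nat.cast_lt (α := ℝ)).mpr hsm]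
  rw [nsmul_eq_mul, nsmul_eq_mul, Nat.cast_sub hsm.le] at hBsum
  calc ‖θ' - θ‖ ^ 2 ≤ ‖zeroOn B θ - θ‖ ^ 2 := by gcongr; exact hHT.2 _ hu
    _ = ∑ j ∈ B, θ j ^ 2 := norm_zeroOn_sub_sq B θ
    _ ≤ ((m : ℝ) - s) / #A * ∑ j ∈ A, θ j ^ 2 := by
      rw [div_mul_eq_mul_div, le_div_iff₀ (hmsstar.trans_le hA')]
      linarith
    _ ≤ ((m : ℝ) - s) / ((m : ℝ) - sstar) * ∑ j ∈ A, θ j ^ 2 := by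
      gcongr
    _ ≤ ((m : ℝ) - s) / ((m : ℝ) - sstar) * ‖θ - θstar‖ ^ 2 := by
      gcongr
      exact sum_compl_supp_sq_le_norm_sub_sq θ θstar
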